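/- arXiv:0803.1320 — 2 statements merged into one kernel-verified Lean document; each statement's English description precedes it below -/
import Mathlib

section
/- For any two diffeomorphisms φ, ψ of ℝⁿ, for all indices 1 ≤ i,j,k ≤ n and every (x,y) ∈ ℝⁿ × GL(n,ℝ), the cocycle identity holds: γ^i_{jk}(φ∘ψ)(x,y) = γ^i_{jk}(φ)(ψ(x), ψ'(x)·y) + γ^i_{jk}(ψ)(x,y), i.e. γ(φ∘ψ) = γ(φ)∘ψ̃ + γ(ψ). -/
noncomputable section

/-- A `C^∞` diffeomorphism of `ℝⁿ` (a bijective `C^∞` map with `C^∞` inverse). -/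
structure Diffeo (n : ℕ) where
  toFun : (Fin n → ℝ) → (Fin n → ℝ)
  invFun : (Fin n → ℝ) → (Fin n → ℝ)
  left_inv : Function.LeftInverse invFun toFun
  right_inv : Function.RightInverse invFun toFun
  smooth_toFun : ContDiff ℝ (⊤ : ℕ∞) toFun
  smooth_invFun : ContDiff ℝ (⊤ : ℕ∞) invFun

/-- Membership in the group `G` of invertible affine transformations of `ℝⁿ`:
maps `x ↦ A·x + b` with `A ∈ GL(n,ℝ)`, `b ∈ ℝⁿ`. -/
def IsAffineMap (n : ℕ) (f : (Fin n → ℝ) → (Fin n → ℝ)) : Prop :=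
  ∃ A : Matrix (Fin n) (Fin n) ℝ, IsUnit A ∧ ∃ b : Fin n → ℝ, ∀ x, f x = A.mulVec x + b

/-- Membership in the group `N` of diffeomorphisms `ψ` with `ψ(0) = 0` and `Dψ(0) = Id`. -/
def InN (n : ℕ) (ψ : Diffeo n) : Prop :=
  ψ.toFun 0 = 0 ∧ fderiv ℝ ψ.toFun 0 = ContinuousLinearMap.id ℝ (Fin n → ℝ)

/-- The Jacobian matrix of `f` at `x`: entry `(i,j)` is `∂ⱼ f^i (x)`. -/
def jacobianM (n : ℕ) (f : (Fin n → ℝ) → (Fin n → ℝ)) (x : Fin n → ℝ) :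
    Matrix (Fin n) (Fin n) ℝ :=
  Matrix.of fun i j => fderiv ℝ f x (Pi.single j 1) i

/-- The second-order partial derivative `∂ⱼ∂ₖ f^i (x)`. -/
def secondPartial (n : ℕ) (f : (Fin n → ℝ) → (Fin n → ℝ)) (i j k : Fin n)
    (x : Fin n → ℝ) : ℝ :=
  fderiv ℝ (fun z => fderiv ℝ f z (Pi.single k 1) i) x (Pi.single j 1)

/-- The cocycle `γ^i_{jk}(f)(x,y) = Σ (y⁻¹)^i_λ (f'(x)⁻¹)^λ_ρ ∂_μ∂_ν f^ρ(x) y^ν_j y^μ_k`. -/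
def gammaFn (n : ℕ) (f : (Fin n → ℝ) → (Fin n → ℝ)) (i j k : Fin n)
    (x : Fin n → ℝ) (y : Fin n → Fin n → ℝ) : ℝ :=
  ∑ lam : Fin n, ∑ ρ : Fin n, ∑ μ : Fin n, ∑ ν : Fin n,
    (Matrix.of y)⁻¹ i lam * (jacobianM n f x)⁻¹ lam ρ
      * secondPartial n f ρ μ ν x * y ν j * y μ k

/-! By the chain rule the Jacobian of `φ ∘ ψ` at `x` is `A * B` with `A = φ'(ψ x)` and
`B = ψ'(x)`, and by the second-order chain rule the Hessian matrix of the component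
`(φ ∘ ψ)^ρ` is `Bᵀ H_φ^ρ B + ∑ₐ A_ρₐ H_ψ^a`. Writing `γ^i_{jk}(f)(x, y)` as the `(k, j)` entry of
`Yᵀ (∑_ρ (Y⁻¹ f'(x)⁻¹)_{iρ} H_f^ρ) Y`, the first term gives `γ(φ)` at `(ψ x, B Y)`, and in the
second `A⁻¹` cancels against `A`, leaving `γ(ψ)`. -/

open Matrix

section SecondDerivative

variable {E F G : Type*} [NormedAddCommGroup E] [NormedSpace ℝ E] [NormedAddCommGroup F]
  [NormedSpace ℝ F] [NormedAddCommGroup G] [NormedSpace ℝ G]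

theorem fderiv_fderiv_comp_apply {f : F → G} {g : E → F} (hf : ContDiff ℝ 2 f)
    (hg : ContDiff ℝ 2 g) (x u v : E) :
    fderiv ℝ (fderiv ℝ (f ∘ g)) x u v
      = fderiv ℝ (fderiv ℝ f) (g x) (fderiv ℝ g x u) (fderiv ℝ g x v)
        + fderiv ℝ f (g x) (fderiv ℝ (fderiv ℝ g) x u v) := by
  have hf1 : Differentiable ℝ f := hf.differentiable two_ne_zero
  have hg1 : Differentiable ℝ g := hg.differentiable two_ne_zero
  have hf2 : Differentiable ℝ (fderiv ℝ f) :=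
    (hf.fderiv_right (m := 1) le_rfl).differentiable one_ne_zero
  have hg2 : Differentiable ℝ (fderiv ℝ g) :=
    (hg.fderiv_right (m := 1) le_rfl).differentiable one_ne_zero
  have hchain : fderiv ℝ (f ∘ g) = fun z => (fderiv ℝ f (g z)).comp (fderiv ℝ g z) :=
    funext fun z => fderiv_comp z (hf1 _) (hg1 _)
  have hderiv : HasFDerivAt (fun z => (fderiv ℝ f (g z)).comp (fderiv ℝ g z)) _ x :=
    ((hf2 (g x)).hasFDerivAt.comp x (hg1 x).hasFDerivAt).clm_comp (hg2 x).hasFDerivAt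
  rw [hchain, hderiv.fderiv]
  simp [add_comm]

theorem ContinuousLinearMap.apply_apply_eq_sum {n : ℕ}
    (B : (Fin n → ℝ) →L[ℝ] (Fin n → ℝ) →L[ℝ] F) (u v : Fin n → ℝ) :
    B u v = ∑ a, ∑ b, (u a * v b) • B (Pi.single a 1) (Pi.single b 1) := by
  conv_lhs => rw [pi_eq_sum_univ' u, pi_eq_sum_univ' v]
  simp only [map_sum, map_smul, FunLike.coe_sum, FunLike.coe_smul,
    Finset.sum_apply, Pi.smul_apply, Finset.smul_sum, mul_smul]
  rw [Finset.sum_comm]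
  simp_rw [smul_comm (v _)]

end SecondDerivative

theorem Matrix.sum_smul_transpose_mul_mul_add {ι κ l m R : Type*} [Fintype ι] [Fintype κ]
    [Fintype m] [CommSemiring R] (w : ι → R) (B : Matrix m l R) (H : ι → Matrix m m R)
    (A : Matrix ι κ R) (G : κ → Matrix l l R) :
    ∑ ρ, w ρ • (Bᵀ * H ρ * B + ∑ a, A ρ a • G a)
      = Bᵀ * (∑ ρ, w ρ • H ρ) * B + ∑ a, (w ᵥ* A) a • G a := by
  simp only [smul_add, Finset.sum_add_distrib, Finset.smul_sum, Matrix.sum_mul, Matrix.mul_sum,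
    Matrix.mul_smul, Matrix.smul_mul, vecMul, dotProduct, Finset.sum_smul, smul_smul]
  rw [Finset.sum_comm (γ := κ)]

theorem Matrix.transpose_mul_sum_smul_mul_cocycle {m R : Type*} [Fintype m] [DecidableEq m]
    [CommRing R] {A : Matrix m m R} (hA : IsUnit A.det) (B Y : Matrix m m R)
    (H G : m → Matrix m m R) (i : m) :
    Yᵀ * (∑ ρ, (Y⁻¹ * (A * B)⁻¹) i ρ • (Bᵀ * H ρ * B + ∑ a, A ρ a • G a)) * Y
      = (B * Y)ᵀ * (∑ ρ, ((B * Y)⁻¹ * A⁻¹) i ρ • H ρ) * (B * Y)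
        + Yᵀ * (∑ ρ, (Y⁻¹ * B⁻¹) i ρ • G ρ) * Y := by
  have hrow : (Y⁻¹ * (A * B)⁻¹) i ᵥ* A = (Y⁻¹ * B⁻¹) i := by
    rw [← mul_apply_eq_vecMul, Matrix.mul_inv_rev, ← Matrix.mul_assoc, Matrix.mul_assoc _ A⁻¹,
      Matrix.nonsing_inv_mul _ hA, Matrix.mul_one]
  rw [Matrix.sum_smul_transpose_mul_mul_add, hrow, Matrix.mul_inv_rev A, Matrix.mul_inv_rev B,
    Matrix.transpose_mul]
  simp only [Matrix.mul_add, Matrix.add_mul, Matrix.mul_assoc]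

section Jacobian

variable {n : ℕ}

theorem jacobianM_eq_toMatrix' (f : (Fin n → ℝ) → (Fin n → ℝ)) (x : Fin n → ℝ) :
    jacobianM n f x = LinearMap.toMatrix' (fderiv ℝ f x : (Fin n → ℝ) →ₗ[ℝ] (Fin n → ℝ)) :=
  rfl

theorem jacobianM_comp {f g : (Fin n → ℝ) → (Fin n → ℝ)} {x : Fin n → ℝ}
    (hf : DifferentiableAt ℝ f (g x)) (hg : DifferentiableAt ℝ g x) :
    jacobianM n (f ∘ g) x = jacobianM n f (g x) * jacobianM n g x := by
  rw [jacobianM_eq_toMatrix', fderiv_comp x hf hg, ContinuousLinearMap.toLinearMap_comp,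
    LinearMap.toMatrix'_comp]
  rfl

theorem Diffeo.isUnit_jacobianM (φ : Diffeo n) (x : Fin n → ℝ) :
    IsUnit (jacobianM n φ.toFun x) := by
  have hinv : jacobianM n φ.invFun (φ.toFun x) * jacobianM n φ.toFun x = 1 := by
    rw [← jacobianM_comp (φ.smooth_invFun.differentiable (by simp) _)
      (φ.smooth_toFun.differentiable (by simp) _), φ.left_inv.comp_eq_id, jacobianM_eq_toMatrix',
      fderiv_id]
    exact LinearMap.toMatrix'_id
  exact (Matrix.isUnit_iff_isUnit_det _).mpr (isUnit_det_of_left_inverse hinv)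

end Jacobian

section Hessian

variable {n : ℕ}

def hessianM (n : ℕ) (f : (Fin n → ℝ) → (Fin n → ℝ)) (ρ : Fin n) (x : Fin n → ℝ) :
    Matrix (Fin n) (Fin n) ℝ :=
  Matrix.of fun μ ν => secondPartial n f ρ μ ν x

theorem secondPartial_eq_fderiv_fderiv {f : (Fin n → ℝ) → (Fin n → ℝ)} {x : Fin n → ℝ}
    (hf : DifferentiableAt ℝ (fderiv ℝ f) x) (ρ μ ν : Fin n) :
    secondPartial n f ρ μ ν x = fderiv ℝ (fderiv ℝ f) x (Pi.single μ 1) (Pi.single ν 1) ρ := by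
  let L : ((Fin n → ℝ) →L[ℝ] (Fin n → ℝ)) →L[ℝ] ℝ :=
    (ContinuousLinearMap.proj (R := ℝ) (φ := fun _ : Fin n => ℝ) ρ).comp
      (ContinuousLinearMap.apply ℝ _ (Pi.single ν 1))
  exact congrArg (· (Pi.single μ 1)) (L.hasFDerivAt.comp x hf.hasFDerivAt).fderiv

theorem fderiv_apply_eq_sum_jacobianM (f : (Fin n → ℝ) → (Fin n → ℝ)) (x w : Fin n → ℝ)
    (ρ : Fin n) : fderiv ℝ f x w ρ = ∑ a, jacobianM n f x ρ a * w a := by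
  change _ = (jacobianM n f x *ᵥ w) ρ
  rw [jacobianM_eq_toMatrix', LinearMap.toMatrix'_mulVec]
  rfl

theorem hessianM_comp {f g : (Fin n → ℝ) → (Fin n → ℝ)} (hf : ContDiff ℝ 2 f)
    (hg : ContDiff ℝ 2 g) (ρ : Fin n) (x : Fin n → ℝ) :
    hessianM n (f ∘ g) ρ x
      = (jacobianM n g x)ᵀ * hessianM n f ρ (g x) * jacobianM n g x
        + ∑ a, jacobianM n f (g x) ρ a • hessianM n g a x := by
  have hD2 : ∀ {h : (Fin n → ℝ) → (Fin n → ℝ)}, ContDiff ℝ 2 h → ∀ y,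
      DifferentiableAt ℝ (fderiv ℝ h) y :=
    fun hh => (hh.fderiv_right (m := 1) le_rfl).differentiable one_ne_zero
  ext μ ν
  simp only [hessianM, Matrix.of_apply, Matrix.add_apply, Matrix.sum_apply, Matrix.smul_apply,
    secondPartial_eq_fderiv_fderiv (hD2 (hf.comp hg) _),
    secondPartial_eq_fderiv_fderiv (hD2 hf _), secondPartial_eq_fderiv_fderiv (hD2 hg _),
    fderiv_fderiv_comp_apply hf hg, Pi.add_apply, fderiv_apply_eq_sum_jacobianM f]
  congr 1
  rw [ContinuousLinearMap.apply_apply_eq_sum]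
  simp only [Finset.sum_apply, Pi.smul_apply, smul_eq_mul, Matrix.mul_apply,
    Matrix.transpose_apply, Matrix.of_apply, Finset.sum_mul]
  rw [Finset.sum_comm]
  refine Finset.sum_congr rfl fun a _ => Finset.sum_congr rfl fun b _ => ?_
  simp only [jacobianM, Matrix.of_apply]
  ring

end Hessian

theorem gammaFn_eq_transpose_mul_sum_smul_hessianM {n : ℕ} (f : (Fin n → ℝ) → (Fin n → ℝ))
    (i j k : Fin n) (x : Fin n → ℝ) (y : Fin n → Fin n → ℝ) :
    gammaFn n f i j k x y
      = ((Matrix.of y)ᵀ * (∑ ρ, ((Matrix.of y)⁻¹ * (jacobianM n f x)⁻¹) i ρ • hessianM n f ρ x)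
          * Matrix.of y) k j := by
  simp only [gammaFn, hessianM, Matrix.mul_smul, Matrix.sum_apply,
    Matrix.smul_apply, smul_eq_mul, Matrix.mul_apply, Matrix.transpose_apply, Matrix.of_apply,
    Finset.sum_mul, Finset.mul_sum]
  -- both sides are the same fourfold sum, summed in the orders `λρμν` and `νρμλ`
  rw [Finset.sum_comm]; conv_rhs => rw [Finset.sum_comm]
  refine Finset.sum_congr rfl fun ρ _ => ?_
  rw [Finset.sum_comm]; conv_rhs => rw [Finset.sum_comm]
  refine Finset.sum_congr rfl fun μ _ => ?_
  rw [Finset.sum_comm]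
  refine Finset.sum_congr rfl fun ν _ => Finset.sum_congr rfl fun lam _ => ?_
  ring

theorem stmt3_general (n : ℕ) (φ ψ : Diffeo n) (i j k : Fin n) (x : Fin n → ℝ)
    (y : Fin n → Fin n → ℝ) :
    gammaFn n (φ.toFun ∘ ψ.toFun) i j k x y
      = gammaFn n φ.toFun i j k (ψ.toFun x)
          (fun a b => ∑ c : Fin n, jacobianM n ψ.toFun x a c * y c b)
        + gammaFn n ψ.toFun i j k x y := by
  have hφ : ContDiff ℝ 2 φ.toFun := φ.smooth_toFun.of_le (WithTop.coe_le_coe.mpr le_top)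
  have hψ : ContDiff ℝ 2 ψ.toFun := ψ.smooth_toFun.of_le (WithTop.coe_le_coe.mpr le_top)
  have hBY : Matrix.of (fun a b => ∑ c : Fin n, jacobianM n ψ.toFun x a c * y c b)
      = jacobianM n ψ.toFun x * Matrix.of y := rfl
  simp only [gammaFn_eq_transpose_mul_sum_smul_hessianM, hBY, hessianM_comp hφ hψ,
    jacobianM_comp (hφ.differentiable two_ne_zero _) (hψ.differentiable two_ne_zero _),
    Matrix.transpose_mul_sum_smul_mul_cocycle
      ((Matrix.isUnit_iff_isUnit_det _).mp (φ.isUnit_jacobianM _)), Matrix.add_apply]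

/-- **Cocycle identity**: `γ(φ∘ψ) = γ(φ)∘ψ̃ + γ(ψ)` on `ℝⁿ × GL(n,ℝ)`. -/
theorem stmt3 (n : ℕ) (φ ψ : Diffeo n) (i j k : Fin n) (x : Fin n → ℝ)
    (y : Fin n → Fin n → ℝ) (hy : IsUnit (Matrix.of y)) :
    gammaFn n (φ.toFun ∘ ψ.toFun) i j k x y
      = gammaFn n φ.toFun i j k (ψ.toFun x)
          (fun a b => ∑ c : Fin n, jacobianM n ψ.toFun x a c * y c b)
        + gammaFn n ψ.toFun i j k x y :=
  stmt3_general n φ ψ i j k x y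
end
end

section
/- Let φ be a diffeomorphism of ℝ^{2n+1} (bijective C^∞ with C^∞ inverse) which is an orientation preserving contact transformation: there is a function f : ℝ^{2n+1} → ℝ with f(x) > 0 for all x such that α_{φ(x)}(Dφ(x)v) = f(x)·α_x(v) for all x and all tangent vectors v. Then there exist unique a ∈ ℝ^{2n+1}, A ∈ Sp(n,ℝ) and t > 0 such that ψ := (L_a ∘ S_A ∘ μ_t)⁻¹ ∘ φ satisfies: ψ(0) = 0; Dψ(0)v = v for every v with v⁰ = 0; and the 0-th component of Dψ(0)e₀ equals 1 (i.e. the H-tangent map of ψ at 0 is the identity). -/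
noncomputable section

/-- Points of `ℝ^{2n+1}`, written `x = (x⁰, x¹, …, x^{2n})`. -/
abbrev HPt (n : ℕ) := Fin (2*n+1) → ℝ

/-- `β(x',y') = (1/2)·Σ_{i=1}^n (x^i y^{n+i} − x^{n+i} y^i)` for `x', y' ∈ ℝ^{2n}`. -/
def beta2 (n : ℕ) (x y : Fin (2*n) → ℝ) : ℝ :=
  (1/2) * ∑ i : Fin n,
    (x ⟨i.1, by have := i.isLt; omega⟩ * y ⟨n + i.1, by have := i.isLt; omega⟩
      - x ⟨n + i.1, by have := i.isLt; omega⟩ * y ⟨i.1, by have := i.isLt; omega⟩)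

/-- The Heisenberg group law `x ∗ y = (x⁰ + y⁰ + β(x',y'), x' + y')` on `ℝ^{2n+1}`. -/
def hmul (n : ℕ) (x y : HPt n) : HPt n :=
  Fin.cons (x 0 + y 0 + beta2 n (Fin.tail x) (Fin.tail y))
    (fun i => Fin.tail x i + Fin.tail y i)

/-- The contact form: `α_x(v) = −v⁰ + (1/2)·Σ_{i=1}^n (x^i v^{n+i} − x^{n+i} v^i)`. -/
def alphaForm (n : ℕ) (x v : HPt n) : ℝ :=
  -(v 0) + beta2 n (Fin.tail x) (Fin.tail v)

/-- The canonical frame `E_0 = ∂₀`, `E_i = ∂_i − (1/2)x^{n+i}∂₀`,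
`E_{n+i} = ∂_{n+i} + (1/2)x^i∂₀` (uniformly: `E_μ|ₓ = e_μ + β(x', e_μ')·e₀`). -/
def Efield (n : ℕ) (μ : Fin (2*n+1)) (x : HPt n) : HPt n :=
  (Pi.single μ 1 : HPt n)
    + beta2 n (Fin.tail x) (Fin.tail (Pi.single μ 1 : HPt n)) • (Pi.single 0 1 : HPt n)

/-- The transformation `S_A(x) = (x⁰, A·x')` for a `2n×2n` matrix `A`. -/
def SAmap (n : ℕ) (A : Matrix (Fin (2*n)) (Fin (2*n)) ℝ) (x : HPt n) : HPt n :=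
  Fin.cons (x 0) (A.mulVec (Fin.tail x))

/-- The contact homothety `μ_t(x) = (t²x⁰, t·x')`. -/
def muT (n : ℕ) (t : ℝ) (x : HPt n) : HPt n :=
  Fin.cons (t ^ 2 * x 0) (fun i => t * Fin.tail x i)

/-- The standard symplectic matrix `J = [[0, Iₙ], [−Iₙ, 0]]` on `ℝ^{2n}`. -/
def Jmat (n : ℕ) : Matrix (Fin (2*n)) (Fin (2*n)) ℝ :=
  Matrix.of fun i j =>
    if i.1 < n ∧ j.1 = i.1 + n then (1 : ℝ)
    else if j.1 < n ∧ i.1 = j.1 + n then -1 else 0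

/-- `A ∈ Sp(n,ℝ)`: the symplectic condition `Aᵀ·J·A = J`. -/
def IsSymplectic (n : ℕ) (A : Matrix (Fin (2*n)) (Fin (2*n)) ℝ) : Prop :=
  A.transpose * Jmat n * A = Jmat n

/-!
Write `a = φ 0` and `M = Dφ(0)`. At `0` the contact condition says that `M` maps horizontal
vectors (`v⁰ = 0`) into `ker α_a`, and that `α_a(M e₀) = -f(0)`. Differentiating it once more
and using the symmetry of `D²φ(0)` shows that the horizontal block `Q` of `M` satisfies
`β(Qu, Qw) = f(0) β(u, w)`, so `Q = t A` with `t = √f(0)` and `A ∈ Sp(n,ℝ)`.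
Conversely, `z ↦ b ∗ S_A(μ_t z)` is `b` plus a linear isomorphism `Λ` with
`α_b(Λ z) = -t² z⁰`, so necessarily `ψ = Λ⁻¹ ∘ (φ - b)`, and the normalisation of `ψ` at `0`
says exactly `b = a`, `Q = t A` and `t² = f(0)`. This determines `(b, A, t)`.
-/

open Matrix

section Symplectic
variable {n : ℕ}

def beta2Form (n : ℕ) : LinearMap.BilinForm ℝ (Fin (2*n) → ℝ) :=
  LinearMap.mk₂ ℝ (beta2 n)
    (fun u u' w => by
      simp only [beta2, Pi.add_apply, ← mul_add, ← Finset.sum_add_distrib]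
      congr 1; exact Finset.sum_congr rfl fun _ _ => by ring)
    (fun c u w => by
      simp only [beta2, Pi.smul_apply, smul_eq_mul, Finset.mul_sum]
      exact Finset.sum_congr rfl fun _ _ => by ring)
    (fun u w w' => by
      simp only [beta2, Pi.add_apply, ← mul_add, ← Finset.sum_add_distrib]
      congr 1; exact Finset.sum_congr rfl fun _ _ => by ring)
    (fun c u w => by
      simp only [beta2, Pi.smul_apply, smul_eq_mul, Finset.mul_sum]
      exact Finset.sum_congr rfl fun _ _ => by ring)

@[simp] lemma beta2Form_apply (u w : Fin (2*n) → ℝ) : beta2Form n u w = beta2 n u w := rfl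

lemma beta2_swap (u w : Fin (2*n) → ℝ) : beta2 n w u = -beta2 n u w := by
  simp only [beta2, ← mul_neg, ← Finset.sum_neg_distrib]
  congr 1; exact Finset.sum_congr rfl fun _ _ => by ring

lemma sum_fin_two_mul {M : Type*} [AddCommMonoid M] (g : Fin (2*n) → M) :
    ∑ k, g k = ∑ i : Fin n, g ⟨i, by omega⟩ + ∑ i : Fin n, g ⟨n + i, by omega⟩ := by
  rw [← (finCongr (two_mul n).symm).sum_comp, Fin.sum_univ_add]
  rfl

lemma Jmat_mulVec_low (w : Fin (2*n) → ℝ) (i : Fin n) :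
    (Jmat n *ᵥ w) ⟨i, by omega⟩ = w ⟨n + i, by omega⟩ := by
  rw [mulVec, dotProduct, Finset.sum_eq_single ⟨n + i, by omega⟩]
  · simp [Jmat, add_comm]
  · intro l _ hl
    simp only [Jmat, of_apply, ne_eq, Fin.ext_iff] at hl ⊢
    rw [if_neg (by omega), if_neg (by omega), zero_mul]
  · simp

lemma Jmat_mulVec_high (w : Fin (2*n) → ℝ) (i : Fin n) :
    (Jmat n *ᵥ w) ⟨n + i, by omega⟩ = -w ⟨i, by omega⟩ := by
  rw [mulVec, dotProduct, Finset.sum_eq_single ⟨i, by omega⟩]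
  · simp [Jmat, add_comm]
  · intro l _ hl
    simp only [Jmat, of_apply, ne_eq, Fin.ext_iff] at hl ⊢
    rw [if_neg (by omega), if_neg (by omega), zero_mul]
  · simp

lemma dotProduct_Jmat_mulVec (u w : Fin (2*n) → ℝ) :
    u ⬝ᵥ (Jmat n *ᵥ w) = 2 * beta2 n u w := by
  rw [dotProduct, sum_fin_two_mul]
  simp only [Jmat_mulVec_low, Jmat_mulVec_high, beta2, mul_neg, Finset.sum_neg_distrib,
    Finset.sum_sub_distrib]
  ring

lemma beta2_nondegenerate {w : Fin (2*n) → ℝ} (hw : ∀ u, beta2 n u w = 0) : w = 0 := by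
  have hJw : Jmat n *ᵥ w = 0 := by
    rw [← dotProduct_self_eq_zero, dotProduct_Jmat_mulVec, hw, mul_zero]
  funext k
  by_cases hk : k.1 < n
  · simpa [hJw] using (Jmat_mulVec_high w ⟨k, hk⟩).symm
  · have := Jmat_mulVec_low w ⟨k - n, by omega⟩
    rw [hJw] at this
    rw [show k = ⟨n + (k - n), by omega⟩ from Fin.ext (by simp only; omega)]
    exact this.symm

lemma isSymplectic_iff {A : Matrix (Fin (2*n)) (Fin (2*n)) ℝ} :
    IsSymplectic n A ↔ ∀ u w, beta2 n (A *ᵥ u) (A *ᵥ w) = beta2 n u w := by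
  rw [IsSymplectic, ← toBilin'.injective.eq_iff, LinearMap.ext_iff₂]
  refine forall₂_congr fun u w => ?_
  rw [toBilin'_apply', toBilin'_apply', ← mulVec_mulVec, ← mulVec_mulVec, dotProduct_mulVec,
    vecMul_transpose, dotProduct_Jmat_mulVec, dotProduct_Jmat_mulVec]
  constructor <;> intro h <;> linarith

lemma IsSymplectic.isUnit {A : Matrix (Fin (2*n)) (Fin (2*n)) ℝ} (hA : IsSymplectic n A) :
    IsUnit A := by
  refine mulVec_injective_iff_isUnit.1 fun u u' h =>
    sub_eq_zero.1 (beta2_nondegenerate fun v => ?_)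
  rw [← isSymplectic_iff.1 hA, mulVec_sub, h, sub_self]
  simp [beta2]

lemma isSymplectic_inv_smul {Q : Matrix (Fin (2*n)) (Fin (2*n)) ℝ} {t : ℝ} (ht : t ≠ 0)
    (hQ : ∀ u w, beta2 n (Q *ᵥ u) (Q *ᵥ w) = t ^ 2 * beta2 n u w) :
    IsSymplectic n (t⁻¹ • Q) := by
  refine isSymplectic_iff.2 fun u w => ?_
  change beta2Form n ((t⁻¹ • Q) *ᵥ u) ((t⁻¹ • Q) *ᵥ w) = _
  simp only [smul_mulVec, map_smul, LinearMap.smul_apply, smul_eq_mul, beta2Form_apply, hQ]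
  field_simp

end Symplectic

section Contact
variable {n : ℕ}

lemma alphaForm_zero_left (v : HPt n) : alphaForm n 0 v = -v 0 := by
  simp [alphaForm, beta2, Fin.tail]

def betaTail (n : ℕ) : HPt n →L[ℝ] HPt n →L[ℝ] ℝ :=
  ((beta2Form n).compl₁₂ (LinearMap.funLeft ℝ ℝ Fin.succ)
    (LinearMap.funLeft ℝ ℝ Fin.succ)).toContinuousBilinearMap

lemma betaTail_apply (x v : HPt n) : betaTail n x v = beta2 n (Fin.tail x) (Fin.tail v) := rfl

lemma hasFDerivAt_alphaForm {F G : HPt n → HPt n} {F' G' : HPt n →L[ℝ] HPt n} {x : HPt n}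
    (hF : HasFDerivAt F F' x) (hG : HasFDerivAt G G' x) :
    HasFDerivAt (fun y => alphaForm n (F y) (G y))
      (-(ContinuousLinearMap.proj 0).comp G' +
        ((betaTail n).precompR _ (F x) G' + (betaTail n).precompL _ F' (G x))) x := by
  have hG₀ : HasFDerivAt (fun y => G y 0) ((ContinuousLinearMap.proj 0).comp G') x :=
    (ContinuousLinearMap.proj (R := ℝ) (φ := fun _ : Fin (2*n+1) => ℝ) 0).hasFDerivAt.comp x hG
  exact hG₀.neg.add ((betaTail n).hasFDerivAt_of_bilinear hF hG)

/-- `f` is not assumed differentiable: since `α_y(e₀) = -1`, the contact condition reads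
`α_{φ y}(Dφ(y) w) = -α_{φ y}(Dφ(y) e₀) · α_y(w)`, whose two sides can be differentiated. -/
theorem contact_fderiv_identity {φ : HPt n → HPt n} {f : HPt n → ℝ} (hφ : ContDiff ℝ 2 φ)
    (hc : ∀ x v, alphaForm n (φ x) (fderiv ℝ φ x v) = f x * alphaForm n x v) {x w : HPt n}
    (hw : alphaForm n x w = 0) (u : HPt n) :
    -fderiv ℝ (fderiv ℝ φ) x u w 0 + (betaTail n (φ x) (fderiv ℝ (fderiv ℝ φ) x u w)
      + betaTail n (fderiv ℝ φ x u) (fderiv ℝ φ x w)) = f x * betaTail n u w := by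
  have hφ' : HasFDerivAt φ (fderiv ℝ φ x) x := (hφ.differentiable (by norm_num) x).hasFDerivAt
  have hφ'' : HasFDerivAt (fderiv ℝ φ) (fderiv ℝ (fderiv ℝ φ) x) x :=
    ((hφ.fderiv_right (m := 1) (by norm_num)).differentiable (by norm_num) x).hasFDerivAt
  have hP : ∀ v, HasFDerivAt (fun y => alphaForm n (φ y) (fderiv ℝ φ y v)) _ x := fun v =>
    hasFDerivAt_alphaForm hφ' (hφ''.clm_apply (hasFDerivAt_const v x))
  have hα : HasFDerivAt (fun y => alphaForm n y w) _ x :=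
    hasFDerivAt_alphaForm (hasFDerivAt_id x) (hasFDerivAt_const w x)
  have hf : ∀ y, f y = -alphaForm n (φ y) (fderiv ℝ φ y (Pi.single 0 1)) := fun y => by
    rw [hc]
    simp [alphaForm, beta2, Fin.tail]
  have hPw : (fun y => alphaForm n (φ y) (fderiv ℝ φ y w)) =
      fun y => -alphaForm n (φ y) (fderiv ℝ φ y (Pi.single 0 1)) * alphaForm n y w := by
    funext y
    rw [hc, hf]
  have hR := (hP (Pi.single 0 1)).fun_neg.fun_mul hα
  rw [← hPw] at hR
  simpa [hw, ← hf] using congrArg (· u) ((hP w).unique hR)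

theorem betaTail_fderiv_of_contact {φ : HPt n → HPt n} {f : HPt n → ℝ}
    (hφ : ContDiff ℝ 2 φ)
    (hc : ∀ x v, alphaForm n (φ x) (fderiv ℝ φ x v) = f x * alphaForm n x v) {x v w : HPt n}
    (hv : alphaForm n x v = 0) (hw : alphaForm n x w = 0) :
    betaTail n (fderiv ℝ φ x v) (fderiv ℝ φ x w) = f x * betaTail n v w := by
  have hvw := contact_fderiv_identity hφ hc hw v
  have hwv := contact_fderiv_identity hφ hc hv w
  rw [(hφ.contDiffAt.isSymmSndFDerivAt (by simp)).eq w v] at hwv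
  simp only [betaTail_apply] at hvw hwv ⊢
  rw [beta2_swap (Fin.tail (fderiv ℝ φ x v)), beta2_swap (Fin.tail v)] at hwv
  linarith

def horizMatrix (M : HPt n →L[ℝ] HPt n) : Matrix (Fin (2*n)) (Fin (2*n)) ℝ :=
  LinearMap.toMatrix' (LinearMap.funLeft ℝ ℝ Fin.succ ∘ₗ M.toLinearMap ∘ₗ
    (Fin.consLinearEquiv ℝ fun _ => ℝ).toLinearMap ∘ₗ LinearMap.inr ℝ ℝ _)

lemma horizMatrix_mulVec (M : HPt n →L[ℝ] HPt n) (u : Fin (2*n) → ℝ) :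
    horizMatrix M *ᵥ u = Fin.tail (M (Fin.cons 0 u)) := by
  rw [horizMatrix, LinearMap.toMatrix'_mulVec]
  rfl

theorem beta2_horizMatrix_mulVec {φ : HPt n → HPt n} {f : HPt n → ℝ}
    (hφ : ContDiff ℝ 2 φ)
    (hc : ∀ x v, alphaForm n (φ x) (fderiv ℝ φ x v) = f x * alphaForm n x v)
    (u w : Fin (2*n) → ℝ) :
    beta2 n (horizMatrix (fderiv ℝ φ 0) *ᵥ u) (horizMatrix (fderiv ℝ φ 0) *ᵥ w) =
      f 0 * beta2 n u w := by
  have h := betaTail_fderiv_of_contact hφ hc (x := 0) (v := Fin.cons 0 u) (w := Fin.cons 0 w)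
    (by simp [alphaForm_zero_left]) (by simp [alphaForm_zero_left])
  simpa only [betaTail_apply, Fin.tail_cons, horizMatrix_mulVec] using h

end Contact

section Normalization
variable {n : ℕ} (b : HPt n) (A : Matrix (Fin (2*n)) (Fin (2*n)) ℝ) (t : ℝ)

def kacLin : HPt n →ₗ[ℝ] HPt n where
  toFun z := Fin.cons (t ^ 2 * z 0 + beta2 n (Fin.tail b) (t • A *ᵥ Fin.tail z))
    (t • A *ᵥ Fin.tail z)
  map_add' z z' := by
    have h : Fin.tail (z + z') = Fin.tail z + Fin.tail z' := rfl
    refine funext (Fin.cases ?_ fun i => ?_) <;>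
      simp only [h, Fin.cons_zero, Fin.cons_succ, Pi.add_apply, mulVec_add, smul_add,
        ← beta2Form_apply, map_add]
    ring
  map_smul' c z := by
    have h : Fin.tail (c • z) = c • Fin.tail z := rfl
    refine funext (Fin.cases ?_ fun i => ?_) <;>
      simp only [h, Fin.cons_zero, Fin.cons_succ, Pi.smul_apply, mulVec_smul, smul_comm t c,
        ← beta2Form_apply, map_smul, smul_eq_mul, RingHom.id_apply]
    ring

lemma kacLin_zero (z : HPt n) :
    kacLin b A t z 0 = t ^ 2 * z 0 + beta2 n (Fin.tail b) (t • A *ᵥ Fin.tail z) := rfl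

lemma tail_kacLin (z : HPt n) : Fin.tail (kacLin b A t z) = t • A *ᵥ Fin.tail z := rfl

lemma hmul_SAmap_muT (z : HPt n) : hmul n b (SAmap n A (muT n t z)) = b + kacLin b A t z := by
  have h : (fun i => t * Fin.tail z i) = t • Fin.tail z := rfl
  refine funext (Fin.cases ?_ fun i => ?_)
  · simp only [hmul, SAmap, muT, Fin.cons_zero, Fin.tail_cons, h, Pi.add_apply, kacLin_zero,
      mulVec_smul]
    ring
  · simp only [hmul, SAmap, muT, Fin.cons_succ, Fin.tail_cons, h, Pi.add_apply,
      ← tail_kacLin, mulVec_smul]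
    rfl

lemma alphaForm_kacLin (z : HPt n) : alphaForm n b (kacLin b A t z) = -(t ^ 2 * z 0) := by
  rw [alphaForm, kacLin_zero, tail_kacLin]
  ring

lemma kacLin_eq_iff_horizMatrix_eq {M : HPt n →L[ℝ] HPt n}
    (hM : ∀ v, v 0 = 0 → alphaForm n b (M v) = 0) :
    (∀ v : HPt n, v 0 = 0 → M v = kacLin b A t v) ↔ horizMatrix M = t • A := by
  refine ⟨fun h => ext_iff_mulVec.2 fun u => ?_, fun h v hv => ?_⟩
  · rw [horizMatrix_mulVec, h _ (Fin.cons_zero _ _), tail_kacLin, Fin.tail_cons, smul_mulVec]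
  · have htail : Fin.tail (M v) = Fin.tail (kacLin b A t v) := by
      rw [tail_kacLin, ← smul_mulVec, ← h, horizMatrix_mulVec, ← hv, Fin.cons_self_tail]
    refine funext (Fin.cases ?_ fun i => congrFun htail i)
    have h0 := hM v hv
    rw [alphaForm] at h0
    rw [kacLin_zero, hv, ← tail_kacLin, ← htail]
    linarith

variable {A t}

lemma kacLin_injective (hA : IsUnit A) (ht : t ≠ 0) : Function.Injective (kacLin b A t) := by
  rw [← LinearMap.ker_eq_bot, LinearMap.ker_eq_bot']
  intro z hz
  have htail : Fin.tail z = 0 := by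
    have h := congrArg Fin.tail hz
    rw [tail_kacLin, ← mulVec_smul] at h
    have := mulVec_injective_iff_isUnit.2 hA (h.trans (mulVec_zero A).symm)
    exact (smul_eq_zero.1 this).resolve_left ht
  have h0 : z 0 = 0 := by
    have := congrFun hz 0
    rw [kacLin_zero, htail, mulVec_zero, smul_zero] at this
    simpa [beta2, ht] using this
  exact funext (Fin.cases h0 fun j => congrFun htail j)

def kacEquiv (hA : IsUnit A) (ht : t ≠ 0) : HPt n ≃L[ℝ] HPt n :=
  (LinearEquiv.ofInjectiveEndo _ (kacLin_injective b hA ht)).toContinuousLinearEquiv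

lemma kacEquiv_apply (hA : IsUnit A) (ht : t ≠ 0) (z : HPt n) :
    kacEquiv b hA ht z = kacLin b A t z := rfl

lemma kacEquiv_symm_apply_zero (hA : IsUnit A) (ht : t ≠ 0) (y : HPt n) :
    (kacEquiv b hA ht).symm y 0 = -alphaForm n b y / t ^ 2 := by
  conv_rhs => rw [← (kacEquiv b hA ht).apply_symm_apply y, kacEquiv_apply, alphaForm_kacLin]
  field_simp

theorem exists_normalization_iff {φ : HPt n → HPt n} {f₀ : ℝ}
    (hc : ∀ v, alphaForm n (φ 0) (fderiv ℝ φ 0 v) = f₀ * alphaForm n 0 v)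
    (hA : IsUnit A) (ht : t ≠ 0) :
    (∃ ψ : HPt n → HPt n, (∀ x, φ x = hmul n b (SAmap n A (muT n t (ψ x)))) ∧ ψ 0 = 0 ∧
        (∀ v : HPt n, v 0 = 0 → fderiv ℝ ψ 0 v = v) ∧ fderiv ℝ ψ 0 (Pi.single 0 1) 0 = 1) ↔
      b = φ 0 ∧ t ^ 2 = f₀ ∧ horizMatrix (fderiv ℝ φ 0) = t • A := by
  set Λ := kacEquiv b hA ht
  have hψ : ∀ ψ : HPt n → HPt n, (∀ x, φ x = hmul n b (SAmap n A (muT n t (ψ x)))) ↔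
      ψ = fun x => Λ.symm (φ x - b) := fun ψ => by
    rw [funext_iff]
    refine forall_congr' fun x => ?_
    rw [hmul_SAmap_muT, Λ.eq_symm_apply, ← kacEquiv_apply b hA ht, eq_sub_iff_add_eq', eq_comm]
  have hD : fderiv ℝ (fun x => Λ.symm (φ x - b)) 0 =
      (Λ.symm : HPt n →L[ℝ] HPt n).comp (fderiv ℝ φ 0) := by
    rw [show (fun x => Λ.symm (φ x - b)) = Λ.symm ∘ (φ · - b) from rfl, Λ.symm.comp_fderiv,
      fderiv_sub_const]
  simp only [hψ, exists_eq_left, hD, ContinuousLinearMap.comp_apply,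
    ContinuousLinearEquiv.coe_coe, Λ.symm_apply_eq, map_zero, sub_eq_zero]
  rw [eq_comm (a := φ 0)]
  refine and_congr_right fun hb => ?_
  subst hb
  have hM : ∀ v, v 0 = 0 → alphaForm n (φ 0) (fderiv ℝ φ 0 v) = 0 := fun v hv => by
    rw [hc, alphaForm_zero_left, hv, neg_zero, mul_zero]
  have he₀ : alphaForm n (φ 0) (fderiv ℝ φ 0 (Pi.single 0 1)) = -f₀ := by
    rw [hc, alphaForm_zero_left, Pi.single_eq_same, mul_neg_one]
  rw [kacEquiv_symm_apply_zero, he₀, neg_neg, div_eq_one_iff_eq (pow_ne_zero 2 ht), eq_comm,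
    and_comm]
  simp only [Λ, kacEquiv_apply]
  rw [kacLin_eq_iff_horizMatrix_eq _ _ _ hM]

end Normalization

theorem stmt16_general (n : ℕ) (φ : HPt n → HPt n)
    (hsm : ContDiff ℝ (⊤ : ℕ∞) φ)
    (hcontact : ∃ f : HPt n → ℝ, (∀ x, 0 < f x) ∧
      ∀ (x v : HPt n), alphaForm n (φ x) (fderiv ℝ φ x v) = f x * alphaForm n x v) :
    ∃! p : HPt n × Matrix (Fin (2*n)) (Fin (2*n)) ℝ × ℝ,
      IsSymplectic n p.2.1 ∧ 0 < p.2.2 ∧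
      ∃ ψ : HPt n → HPt n,
        (∀ x, φ x = hmul n p.1 (SAmap n p.2.1 (muT n p.2.2 (ψ x)))) ∧
        ψ 0 = 0 ∧
        (∀ v : HPt n, v 0 = 0 → fderiv ℝ ψ 0 v = v) ∧
        fderiv ℝ ψ 0 (Pi.single 0 1) 0 = 1 := by
  obtain ⟨f, hf, hc⟩ := hcontact
  set Q := horizMatrix (fderiv ℝ φ 0)
  set t := √(f 0)
  have ht : 0 < t := Real.sqrt_pos.2 (hf 0)
  have ht2 : t ^ 2 = f 0 := Real.sq_sqrt (hf 0).le
  have hA : IsSymplectic n (t⁻¹ • Q) := isSymplectic_inv_smul ht.ne' fun u w => by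
    rw [ht2]; exact beta2_horizMatrix_mulVec (hsm.of_le (by norm_cast)) hc u w
  refine ⟨(φ 0, t⁻¹ • Q, t), ⟨hA, ht, ?_⟩, ?_⟩
  · refine (exists_normalization_iff _ (hc 0) hA.isUnit ht.ne').2 ⟨rfl, ht2, ?_⟩
    rw [smul_smul, mul_inv_cancel₀ ht.ne', one_smul]
  · rintro ⟨b, A, s⟩ ⟨hA', hs, hψ⟩
    dsimp only at hA' hs hψ
    obtain ⟨rfl, hs2, hQA⟩ := (exists_normalization_iff b (hc 0) hA'.isUnit hs.ne').1 hψ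
    obtain rfl : s = t := by rw [← Real.sqrt_sq hs.le, hs2]
    simp [Q, hQA, smul_smul, inv_mul_cancel₀ hs.ne']

/-- **Kac decomposition for contact diffeomorphisms.** Every orientation preserving
contact diffeomorphism `φ` of `ℝ^{2n+1}` determines unique `a ∈ H_n`, `A ∈ Sp(n,ℝ)`,
`t > 0` such that `ψ := (L_a∘S_A∘μ_t)⁻¹∘φ` (equivalently: `φ = L_a∘S_A∘μ_t∘ψ`)
satisfies `ψ(0) = 0` and has identity H-tangent map at `0`:
`Dψ(0)v = v` for `v⁰ = 0`, and `(Dψ(0)e₀)⁰ = 1`. -/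
theorem stmt16 (n : ℕ) (φ φinv : HPt n → HPt n)
    (hli : Function.LeftInverse φinv φ) (hri : Function.RightInverse φinv φ)
    (hsm : ContDiff ℝ (⊤ : ℕ∞) φ) (hsm' : ContDiff ℝ (⊤ : ℕ∞) φinv)
    (hcontact : ∃ f : HPt n → ℝ, (∀ x, 0 < f x) ∧
      ∀ (x v : HPt n), alphaForm n (φ x) (fderiv ℝ φ x v) = f x * alphaForm n x v) :
    ∃! p : HPt n × Matrix (Fin (2*n)) (Fin (2*n)) ℝ × ℝ,
      IsSymplectic n p.2.1 ∧ 0 < p.2.2 ∧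
      ∃ ψ : HPt n → HPt n,
        (∀ x, φ x = hmul n p.1 (SAmap n p.2.1 (muT n p.2.2 (ψ x)))) ∧
        ψ 0 = 0 ∧
        (∀ v : HPt n, v 0 = 0 → fderiv ℝ ψ 0 v = v) ∧
        fderiv ℝ ψ 0 (Pi.single 0 1) 0 = 1 :=
  stmt16_general n φ hsm hcontact
end
end
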